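/- arXiv:2604.08154 — 6 statements merged into one kernel-verified Lean document; each statement's English description precedes it below -/
import Mathlib

section
/- Let ξ, ζ : ℤ → {0,1} be configurations with ξ(x) ≤ ζ(x) for all x ∈ ℤ, and let y ∈ ℤ be such that ζ(y) = 0. Then ∑_{x=y−2}^{y+2} ξ(x) · max(Γ_ξ(x,y) − Γ_ζ(x,y), 0) ≤ ∑_{x=y−2}^{y+2} ζ(x) (1 − ξ(x)) Γ_ζ(x,y). (Since Γ_η(x,y) = 0 whenever |x−y| > 2, these finite sums contain all nonzero terms of the corresponding sums over x ∈ ℤ; this is the first of the two Gobron–Saada necessary and sufficient conditions for attractiveness, verified for the directed exclusion process.) -/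
/-- The DEP jump rate `Γ_η(x,y)` for a configuration `η : ℤ → {0,1} ⊆ ℤ`. -/
def depRate (η : ℤ → ℤ) (x y : ℤ) : ℤ :=
  if y = x + 1 ∨ y = x - 1 then 1
  else if y = x + 2 then η (x + 1)
  else if y = x - 2 then 1 - η (x - 1)
  else 0

lemma depRate_m2 (η : ℤ → ℤ) (y : ℤ) : depRate η (y - 2) y = η (y - 1) := by
  rw [depRate, if_neg (by omega), if_pos (by omega)]
  rw [show y - 2 + 1 = y - 1 by ring]

lemma depRate_m1 (η : ℤ → ℤ) (y : ℤ) : depRate η (y - 1) y = 1 := by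
  rw [depRate, if_pos (by omega)]

lemma depRate_0 (η : ℤ → ℤ) (y : ℤ) : depRate η y y = 0 := by
  rw [depRate, if_neg (by omega), if_neg (by omega), if_neg (by omega)]

lemma depRate_p1 (η : ℤ → ℤ) (y : ℤ) : depRate η (y + 1) y = 1 := by
  rw [depRate, if_pos (by omega)]

lemma depRate_p2 (η : ℤ → ℤ) (y : ℤ) : depRate η (y + 2) y = 1 - η (y + 1) := by
  rw [depRate, if_neg (by omega), if_neg (by omega), if_pos (by omega)]
  rw [show y + 2 - 1 = y + 1 by ring]

/-- First Gobron–Saada attractiveness condition, verified for DEP. -/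
theorem dep_attractiveness_condition_one
    (ξ ζ : ℤ → ℤ)
    (hξ : ∀ x, ξ x = 0 ∨ ξ x = 1)
    (hζ : ∀ x, ζ x = 0 ∨ ζ x = 1)
    (hle : ∀ x, ξ x ≤ ζ x)
    (y : ℤ) (hy : ζ y = 0) :
    ∑ x ∈ Finset.Icc (y - 2) (y + 2), ξ x * max (depRate ξ x y - depRate ζ x y) 0
      ≤ ∑ x ∈ Finset.Icc (y - 2) (y + 2), ζ x * (1 - ξ x) * depRate ζ x y := by
  have hset : Finset.Icc (y - 2) (y + 2) = {y - 2, y - 1, y, y + 1, y + 2} := by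
    ext z; simp only [Finset.mem_Icc, Finset.mem_insert, Finset.mem_singleton]; omega
  have hnm : ∀ a : ℤ, ∀ s : Finset ℤ, a ∉ s → True := fun _ _ _ => trivial
  rw [hset]
  rw [Finset.sum_insert (by simp only [Finset.mem_insert, Finset.mem_singleton]; omega),
    Finset.sum_insert (by simp only [Finset.mem_insert, Finset.mem_singleton]; omega),
    Finset.sum_insert (by simp only [Finset.mem_insert, Finset.mem_singleton]; omega),
    Finset.sum_insert (by simp only [Finset.mem_singleton]; omega),
    Finset.sum_singleton,
    Finset.sum_insert (by simp only [Finset.mem_insert, Finset.mem_singleton]; omega),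
    Finset.sum_insert (by simp only [Finset.mem_insert, Finset.mem_singleton]; omega),
    Finset.sum_insert (by simp only [Finset.mem_insert, Finset.mem_singleton]; omega),
    Finset.sum_insert (by simp only [Finset.mem_singleton]; omega),
    Finset.sum_singleton]
  rw [depRate_m2, depRate_m2, depRate_m1, depRate_m1, depRate_0, depRate_0,
    depRate_p1, depRate_p1, depRate_p2, depRate_p2]
  have h1 : max (ξ (y - 1) - ζ (y - 1)) 0 = 0 := max_eq_right (by have := hle (y - 1); omega)
  have h2 : max (1 - ξ (y + 1) - (1 - ζ (y + 1))) 0 = ζ (y + 1) - ξ (y + 1) := by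
    have := hle (y + 1); rw [max_eq_left (by omega)]; ring
  rw [h1, h2]
  rcases hξ (y-2) with a1|a1 <;> rcases hζ (y-2) with a2|a2 <;>
  rcases hξ (y-1) with a3|a3 <;> rcases hζ (y-1) with a4|a4 <;>
  rcases hξ (y+1) with a5|a5 <;> rcases hζ (y+1) with a6|a6 <;>
  rcases hξ (y+2) with a7|a7 <;> rcases hζ (y+2) with a8|a8 <;>
  rw [a1, a2, a3, a4, a5, a6, a7, a8] <;> norm_num
end

section
/- Let n ≥ 5 be a natural number. For every torus configuration η : ℤ/nℤ → {0,1}, the total outgoing rate equals the total incoming rate: ∑_{η' ≠ η} L_n(η, η') = ∑_{η' ≠ η} L_n(η', η), where both sums run over all torus configurations η' different from η. -/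
/-- The configuration obtained from `η` by exchanging the values at sites `x` and `y`. -/
def torusSwap {n : ℕ} (η : ZMod n → Fin 2) (x y : ZMod n) : ZMod n → Fin 2 :=
  fun z => if z = x then η y else if z = y then η x else η z

/-- The DEP jump rate `L_n(η, η')` between torus configurations. -/
def torusRate {n : ℕ} [NeZero n] (η η' : ZMod n → Fin 2) : ℕ :=
  (Finset.univ.filter fun x : ZMod n =>
      η x ≠ η (x + 1) ∧ torusSwap η x (x + 1) = η').card +
  (Finset.univ.filter fun x : ZMod n =>
      η x = η (x + 1) ∧ torusSwap η x (x + 2) = η').card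

lemma swap_invol {n : ℕ} (η : ZMod n → Fin 2) (x y : ZMod n) :
    torusSwap (torusSwap η x y) x y = η := by
  funext z; simp only [torusSwap]; split_ifs <;> simp_all

lemma swap_eq_comm {n : ℕ} (η η' : ZMod n → Fin 2) (x y : ZMod n) :
    torusSwap η' x y = η ↔ η' = torusSwap η x y := by
  constructor
  · rintro rfl; rw [swap_invol]
  · rintro rfl; rw [swap_invol]

lemma swap_apply_left {n : ℕ} (η : ZMod n → Fin 2) (x y : ZMod n) :
    torusSwap η x y x = η y := by simp [torusSwap]

lemma swap_apply_right {n : ℕ} (η : ZMod n → Fin 2) (x y : ZMod n) :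
    torusSwap η x y y = η x := by
  simp only [torusSwap]; split_ifs with h <;> simp_all

lemma swap_apply_other {n : ℕ} (η : ZMod n → Fin 2) (x y z : ZMod n)
    (hx : z ≠ x) (hy : z ≠ y) : torusSwap η x y z = η z := by
  simp [torusSwap, hx, hy]

lemma swap_ne_iff {n : ℕ} (η : ZMod n → Fin 2) (x y : ZMod n) :
    torusSwap η x y ≠ η ↔ η x ≠ η y := by
  constructor
  · intro h hc
    apply h; funext z
    simp only [torusSwap]; split_ifs <;> simp_all
  · intro h hc
    have := congrFun hc x
    rw [swap_apply_left] at this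
    exact h this.symm

lemma outCount {α β : Type*} [Fintype α] [Fintype β] [DecidableEq β]
    (P : α → Prop) [DecidablePred P] (f : α → β) (b : β) :
    ∑ y ∈ Finset.univ.filter (fun y => y ≠ b),
        (Finset.univ.filter fun x => P x ∧ f x = y).card
      = (Finset.univ.filter fun x => P x ∧ f x ≠ b).card := by
  simp only [Finset.card_filter]
  rw [Finset.sum_comm]
  refine Finset.sum_congr rfl fun x _ => ?_
  rw [Finset.sum_filter]
  calc ∑ y : β, (if y ≠ b then if P x ∧ f x = y then 1 else 0 else 0)
      = ∑ y : β, (if y = f x then (if P x ∧ f x ≠ b then 1 else 0) else 0) := by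
        refine Finset.sum_congr rfl fun y _ => ?_
        split_ifs <;> subst_vars <;> tauto
    _ = _ := by rw [Finset.sum_ite_eq' Finset.univ]; simp

lemma inCount {n : ℕ} [NeZero n] (η : ZMod n → Fin 2) (c : ZMod n)
    (Q : (ZMod n → Fin 2) → ZMod n → Prop) [∀ η' x, Decidable (Q η' x)] :
    ∑ η' ∈ Finset.univ.filter (fun η' => η' ≠ η),
        (Finset.univ.filter fun x => Q η' x ∧ torusSwap η' x (x + c) = η).card
      = (Finset.univ.filter fun x =>
          Q (torusSwap η x (x + c)) x ∧ torusSwap η x (x + c) ≠ η).card := by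
  simp only [Finset.card_filter]
  rw [Finset.sum_comm]
  refine Finset.sum_congr rfl fun x _ => ?_
  rw [Finset.sum_filter]
  calc ∑ η' : ZMod n → Fin 2,
        (if η' ≠ η then if Q η' x ∧ torusSwap η' x (x + c) = η then 1 else 0 else 0)
      = ∑ η' : ZMod n → Fin 2, (if η' = torusSwap η x (x + c) then
          (if Q (torusSwap η x (x + c)) x ∧ torusSwap η x (x + c) ≠ η then 1 else 0)
          else 0) := by
        refine Finset.sum_congr rfl fun η' _ => ?_
        by_cases he : η' = torusSwap η x (x + c)
        · subst he
          simp only [swap_invol, if_pos rfl]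
          split_ifs <;> tauto
        · have h2 : ¬ (torusSwap η' x (x + c) = η) := fun hc => he ((swap_eq_comm _ _ _ _).mp hc)
          simp [he, h2]
    _ = _ := by rw [Finset.sum_ite_eq' Finset.univ]; simp

lemma edge_balance {n : ℕ} [NeZero n] (d : ZMod n → Prop) [DecidablePred d] :
    (Finset.univ.filter fun x => d x ∧ ¬ d (x + 1)).card
      = (Finset.univ.filter fun x => ¬ d x ∧ d (x + 1)).card := by
  have hshift : (Finset.univ.filter fun x => d (x + 1)).card
      = (Finset.univ.filter fun x => d x).card := by
    refine Finset.card_nbij' (fun x => x + 1) (fun x => x - 1) ?_ ?_ ?_ ?_ <;>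
      intro a ha <;> simp_all
  have h1 := Finset.card_filter_add_card_filter_not
    (s := Finset.univ.filter (fun x : ZMod n => d x)) (p := fun x => d (x + 1))
  have h2 := Finset.card_filter_add_card_filter_not
    (s := Finset.univ.filter (fun x : ZMod n => d (x + 1))) (p := fun x => d x)
  rw [Finset.filter_filter, Finset.filter_filter] at h1 h2
  have h3 : (Finset.univ.filter fun x : ZMod n => d (x + 1) ∧ d x)
      = Finset.univ.filter fun x => d x ∧ d (x + 1) := by
    ext x; simp [and_comm]
  have h4 : (Finset.univ.filter fun x : ZMod n => d (x + 1) ∧ ¬ d x)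
      = Finset.univ.filter fun x => ¬ d x ∧ d (x + 1) := by
    ext x; simp [and_comm]
  rw [h3, h4, hshift] at h2
  omega

/-- For DEP on the torus `ℤ/nℤ` (`n ≥ 5`), the total outgoing rate from any
configuration equals the total incoming rate. -/
theorem dep_torus_rate_balance (n : ℕ) [NeZero n] (hn : 5 ≤ n)
    (η : ZMod n → Fin 2) :
    ∑ η' ∈ Finset.univ.filter (fun η' : ZMod n → Fin 2 => η' ≠ η), torusRate η η'
      = ∑ η' ∈ Finset.univ.filter (fun η' : ZMod n → Fin 2 => η' ≠ η), torusRate η' η := by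
  have h10 : (1 : ZMod n) ≠ 0 := by
    intro h
    rw [← Nat.cast_one, ZMod.natCast_eq_zero_iff] at h
    have := Nat.le_of_dvd one_pos h
    omega
  have h20 : (2 : ZMod n) ≠ 0 := by
    intro h
    rw [← Nat.cast_two, ZMod.natCast_eq_zero_iff] at h
    have := Nat.le_of_dvd two_pos h
    omega
  have hx1 : ∀ x : ZMod n, x ≠ x + 1 := fun x h => h10 (by rwa [left_eq_add] at h)
  have hx2 : ∀ x : ZMod n, x ≠ x + 2 := fun x h => h20 (by rwa [left_eq_add] at h)
  have hadd : ∀ x : ZMod n, x + 1 + 1 = x + 2 := fun x => by ring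
  have hx12 : ∀ x : ZMod n, x + 1 ≠ x + 2 := fun x h => hx1 (x + 1) (h.trans (hadd x).symm)
  simp only [torusRate, Finset.sum_add_distrib]
  have out1 :
      ∑ η' ∈ Finset.univ.filter (fun η' : ZMod n → Fin 2 => η' ≠ η),
        (Finset.univ.filter fun x : ZMod n =>
          η x ≠ η (x + 1) ∧ torusSwap η x (x + 1) = η').card
      = (Finset.univ.filter fun x : ZMod n =>
          η x ≠ η (x + 1) ∧ torusSwap η x (x + 1) ≠ η).card := outCount _ _ _
  have out2 :
      ∑ η' ∈ Finset.univ.filter (fun η' : ZMod n → Fin 2 => η' ≠ η),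
        (Finset.univ.filter fun x : ZMod n =>
          η x = η (x + 1) ∧ torusSwap η x (x + 2) = η').card
      = (Finset.univ.filter fun x : ZMod n =>
          η x = η (x + 1) ∧ torusSwap η x (x + 2) ≠ η).card := outCount _ _ _
  have in1 :
      ∑ η' ∈ Finset.univ.filter (fun η' : ZMod n → Fin 2 => η' ≠ η),
        (Finset.univ.filter fun x : ZMod n =>
          η' x ≠ η' (x + 1) ∧ torusSwap η' x (x + 1) = η).card
      = (Finset.univ.filter fun x : ZMod n =>
          torusSwap η x (x + 1) x ≠ torusSwap η x (x + 1) (x + 1)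
            ∧ torusSwap η x (x + 1) ≠ η).card :=
    inCount η 1 (fun η' x => η' x ≠ η' (x + 1))
  have in2 :
      ∑ η' ∈ Finset.univ.filter (fun η' : ZMod n → Fin 2 => η' ≠ η),
        (Finset.univ.filter fun x : ZMod n =>
          η' x = η' (x + 1) ∧ torusSwap η' x (x + 2) = η).card
      = (Finset.univ.filter fun x : ZMod n =>
          torusSwap η x (x + 2) x = torusSwap η x (x + 2) (x + 1)
            ∧ torusSwap η x (x + 2) ≠ η).card :=
    inCount η 2 (fun η' x => η' x = η' (x + 1))
  rw [out1, out2, in1, in2]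
  -- canonical forms
  have e_out1 : (Finset.univ.filter fun x : ZMod n =>
      η x ≠ η (x + 1) ∧ torusSwap η x (x + 1) ≠ η)
      = Finset.univ.filter fun x : ZMod n => η x ≠ η (x + 1) := by
    ext x; simp only [Finset.mem_filter, swap_ne_iff]; tauto
  have e_in1 : (Finset.univ.filter fun x : ZMod n =>
      torusSwap η x (x + 1) x ≠ torusSwap η x (x + 1) (x + 1)
        ∧ torusSwap η x (x + 1) ≠ η)
      = Finset.univ.filter fun x : ZMod n => η x ≠ η (x + 1) := by
    ext x
    simp only [Finset.mem_filter, swap_apply_left, swap_apply_right, swap_ne_iff]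
    constructor
    · rintro ⟨_, h2⟩; exact ⟨Finset.mem_univ x, h2.2⟩
    · rintro ⟨_, h⟩; exact ⟨Finset.mem_univ x, h.symm, h⟩
  have e_out2 : (Finset.univ.filter fun x : ZMod n =>
      η x = η (x + 1) ∧ torusSwap η x (x + 2) ≠ η)
      = Finset.univ.filter fun x : ZMod n =>
          (η x = η (x + 1)) ∧ ¬ (η (x + 1) = η (x + 1 + 1)) := by
    ext x
    simp only [Finset.mem_filter, swap_ne_iff, hadd]
    constructor
    · rintro ⟨_, h1, h2⟩; exact ⟨Finset.mem_univ x, h1, fun hc => h2 (h1.trans hc)⟩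
    · rintro ⟨_, h1, h2⟩; exact ⟨Finset.mem_univ x, h1, fun hc => h2 (h1.symm.trans hc)⟩
  have e_in2 : (Finset.univ.filter fun x : ZMod n =>
      torusSwap η x (x + 2) x = torusSwap η x (x + 2) (x + 1)
        ∧ torusSwap η x (x + 2) ≠ η)
      = Finset.univ.filter fun x : ZMod n =>
          ¬ (η x = η (x + 1)) ∧ (η (x + 1) = η (x + 1 + 1)) := by
    ext x
    have ho : torusSwap η x (x + 2) (x + 1) = η (x + 1) :=
      swap_apply_other η x (x + 2) (x + 1) (Ne.symm (hx1 x)) (hx12 x)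
    simp only [Finset.mem_filter, swap_apply_left, ho, swap_ne_iff, hadd]
    constructor
    · rintro ⟨_, h1, h2⟩
      exact ⟨Finset.mem_univ x, fun hc => h2 (hc.trans h1.symm), h1.symm⟩
    · rintro ⟨_, h1, h2⟩
      exact ⟨Finset.mem_univ x, h2.symm, fun hc => h1 (hc.trans h2.symm)⟩
  rw [e_out1, e_in1, e_out2, e_in2,
    edge_balance (fun x : ZMod n => η x = η (x + 1))]
end

section
/- The basic coupling of DEP is monotone: for all configurations ξ, ζ : ℤ → {0,1} with ξ(z) ≤ ζ(z) for all z ∈ ℤ, and for every x ∈ ℤ and α ∈ {0,1}, one has U_{x,α}(ξ)(z) ≤ U_{x,α}(ζ)(z) for all z ∈ ℤ. -/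
/-- The configuration obtained from `η` by exchanging the values `η(x)` and `η(y)`. -/
def confSwap (η : ℤ → ℤ) (x y : ℤ) : ℤ → ℤ :=
  fun z => if z = x then η y else if z = y then η x else η z

/-- The DEP elementary update `Φ_x`. -/
def depPhi (x : ℤ) (η : ℤ → ℤ) : ℤ → ℤ :=
  if η x = η (x + 1) then confSwap η x (x + 2) else confSwap η x (x + 1)

/-- The basic coupling update `U_{x,α}`: apply `Φ_x` if `η(x) = α`, do nothing otherwise. -/
def depU (x α : ℤ) (η : ℤ → ℤ) : ℤ → ℤ :=
  if η x = α then depPhi x η else η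

/-- Monotonicity of the basic coupling of DEP: if `ξ ≤ ζ` pointwise, then
`U_{x,α}(ξ) ≤ U_{x,α}(ζ)` pointwise. -/
theorem depU_monotone
    (ξ ζ : ℤ → ℤ)
    (hξ : ∀ z, ξ z = 0 ∨ ξ z = 1)
    (hζ : ∀ z, ζ z = 0 ∨ ζ z = 1)
    (hle : ∀ z, ξ z ≤ ζ z)
    (x α : ℤ) (hα : α = 0 ∨ α = 1) :
    ∀ z, depU x α ξ z ≤ depU x α ζ z := by
  intro z
  have h1 := hξ x; have h2 := hξ (x+1); have h3 := hξ (x+2)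
  have g1 := hζ x; have g2 := hζ (x+1); have g3 := hζ (x+2)
  have l1 := hle x; have l2 := hle (x+1); have l3 := hle (x+2)
  have lz := hle z; have hz := hξ z; have gz := hζ z
  simp only [depU, depPhi, confSwap]
  split_ifs <;> (try unfold confSwap) <;> (try split_ifs) <;> subst_vars <;> omega
end

section
/- Under the basic coupling of DEP, updates are local and the number of discrepancies cannot increase: for all configurations ζ, ξ : ℤ → {0,1}, every x ∈ ℤ and α ∈ {0,1}: (i) U_{x,α}(η)(z) = η(z) for every configuration η and every z ∉ {x, x+1, x+2}; and (ii) #{z ∈ {x, x+1, x+2} : U_{x,α}(ζ)(z) ≠ U_{x,α}(ξ)(z)} ≤ #{z ∈ {x, x+1, x+2} : ζ(z) ≠ ξ(z)}. -/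
lemma card3 (x : ℤ) (p : ℤ → Prop) [DecidablePred p] :
    (({x, x + 1, x + 2} : Finset ℤ).filter p).card =
      (if p x then 1 else 0) + (if p (x+1) then 1 else 0) + (if p (x+2) then 1 else 0) := by
  have h1 : x ≠ x + 1 := by omega
  have h2 : x ≠ x + 2 := by omega
  have h3 : x + 1 ≠ x + 2 := by omega
  rw [Finset.filter_insert, Finset.filter_insert, Finset.filter_singleton]
  split_ifs <;> simp_all [Finset.card_insert_of_notMem, h1, h2, h3]

/-- Under the basic coupling of DEP: (i) updates are local, affecting only the sites
`{x, x+1, x+2}`; (ii) the number of discrepancies cannot increase. -/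
theorem depU_local_and_discrepancies_nonincreasing
    (ζ ξ : ℤ → ℤ)
    (hζ : ∀ z, ζ z = 0 ∨ ζ z = 1)
    (hξ : ∀ z, ξ z = 0 ∨ ξ z = 1)
    (x α : ℤ) (hα : α = 0 ∨ α = 1) :
    (∀ η : ℤ → ℤ, (∀ z, η z = 0 ∨ η z = 1) →
      ∀ z : ℤ, z ∉ ({x, x + 1, x + 2} : Set ℤ) → depU x α η z = η z) ∧
    (({x, x + 1, x + 2} : Finset ℤ).filter
        (fun z => depU x α ζ z ≠ depU x α ξ z)).card
      ≤ (({x, x + 1, x + 2} : Finset ℤ).filter (fun z => ζ z ≠ ξ z)).card := by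
  constructor
  · intro η _ z hz
    simp only [Set.mem_insert_iff, Set.mem_singleton_iff, not_or] at hz
    obtain ⟨h1, h2, h3⟩ := hz
    simp only [depU, depPhi]
    split_ifs <;> simp [confSwap, h1, h2, h3]
  · have e1 : x + 1 ≠ x := by omega
    have e2 : x + 2 ≠ x := by omega
    have e3 : x + 2 ≠ x + 1 := by omega
    have e4 : x + 1 ≠ x + 2 := by omega
    rw [card3, card3]
    rcases hζ x with h1 | h1 <;> rcases hζ (x+1) with h2 | h2 <;>
      rcases hζ (x+2) with h3 | h3 <;> rcases hξ x with h4 | h4 <;>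
      rcases hξ (x+1) with h5 | h5 <;> rcases hξ (x+2) with h6 | h6 <;>
      rcases hα with hα | hα <;>
      simp [depU, depPhi, confSwap, h1, h2, h3, h4, h5, h6, hα, e1, e2, e3, e4]
end

section
/- Exact macroscopic stability of DEP under the basic coupling: let ζ, ξ : ℤ → {0,1} be finite configurations (each with finitely many 1's). Then for every x ∈ ℤ and α ∈ {0,1}, Δ(U_{x,α}(ζ), U_{x,α}(ξ)) ≤ Δ(ζ, ξ). -/
/-- The partial sum `∑_{y ≤ x} (ζ(y) - ξ(y))` of signed discrepancies (a finite sum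
when `ζ` and `ξ` are finite configurations). -/
noncomputable def discrepancyPartialSum (ζ ξ : ℤ → ℤ) (x : ℤ) : ℤ :=
  ∑ᶠ y ∈ {y : ℤ | y ≤ x}, (ζ y - ξ y)

/-- `Δ(ζ, ξ) = sup_x |∑_{y ≤ x} (ζ(y) - ξ(y))|`. -/
noncomputable def depDelta (ζ ξ : ℤ → ℤ) : ℤ :=
  ⨆ x : ℤ, |discrepancyPartialSum ζ ξ x|

/-!
Outside the window `{x, x+1, x+2}` the update changes nothing, and inside it conserves the number
of particles, so the partial sums of `ζ - ξ` can change only at `x` and `x + 1`. A case check on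
the window shows that the new partial sums there are old partial sums at one of `x - 1, …, x + 2`.
Hence every new partial sum is an old one, and the supremum of their absolute values cannot grow.
-/

open Finset

section Window

variable (x α : ℤ) (η : ℤ → ℤ)

lemma depU_apply_of_ne {z : ℤ} (h₀ : z ≠ x) (h₁ : z ≠ x + 1) (h₂ : z ≠ x + 2) :
    depU x α η z = η z := by
  unfold depU depPhi
  split_ifs <;> simp [confSwap, h₀, h₁, h₂]

lemma depU_apply_self :
    depU x α η x =
      if η x = α then (if η x = η (x + 1) then η (x + 2) else η (x + 1)) else η x := by
  unfold depU depPhi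
  split_ifs <;> simp [confSwap]

lemma depU_apply_add_one :
    depU x α η (x + 1) = if η x = α ∧ η x ≠ η (x + 1) then η x else η (x + 1) := by
  unfold depU depPhi
  split_ifs <;> simp_all [confSwap]

lemma sum_range_three_depU :
    ∑ i ∈ range 3, depU x α η (x + i) = ∑ i ∈ range 3, η (x + i) := by
  simp only [sum_range_succ, range_zero, sum_empty, zero_add, Nat.cast_zero, Nat.cast_one,
    Nat.cast_ofNat, add_zero]
  unfold depU depPhi
  split_ifs <;> simp only [confSwap] <;> split_ifs <;> omega

end Window

lemma exists_sum_range_depU_sub_eq_of_lt_three {ζ ξ : ℤ → ℤ}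
    (hζ : ∀ z, ζ z = 0 ∨ ζ z = 1) (hξ : ∀ z, ξ z = 0 ∨ ξ z = 1) (x α : ℤ) {k : ℕ}
    (hk : k < 3) :
    ∃ j, ∑ i ∈ range k, (depU x α ζ (x + i) - depU x α ξ (x + i)) =
      ∑ i ∈ range j, (ζ (x + i) - ξ (x + i)) := by
  suffices ∃ j < 4, ∑ i ∈ range k, (depU x α ζ (x + i) - depU x α ξ (x + i)) =
      ∑ i ∈ range j, (ζ (x + i) - ξ (x + i)) from this.imp fun _ => And.right
  have := hζ x; have := hζ (x + 1); have := hζ (x + 2)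
  have := hξ x; have := hξ (x + 1); have := hξ (x + 2)
  interval_cases k <;>
    simp only [Nat.exists_lt_succ_right, Nat.lt_one_iff, exists_eq_left, sum_range_succ,
      range_zero, sum_empty, Nat.cast_zero, Nat.cast_one, Nat.cast_ofNat, add_zero, true_or,
      depU_apply_self, depU_apply_add_one] <;>
    split_ifs <;> omega

lemma exists_sum_range_depU_sub_eq {ζ ξ : ℤ → ℤ}
    (hζ : ∀ z, ζ z = 0 ∨ ζ z = 1) (hξ : ∀ z, ξ z = 0 ∨ ξ z = 1) (x α : ℤ) (k : ℕ) :
    ∃ j, ∑ i ∈ range k, (depU x α ζ (x + i) - depU x α ξ (x + i)) =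
      ∑ i ∈ range j, (ζ (x + i) - ξ (x + i)) := by
  rcases lt_or_ge k 3 with hk | hk
  · exact exists_sum_range_depU_sub_eq_of_lt_three hζ hξ x α hk
  obtain ⟨m, rfl⟩ := Nat.exists_eq_add_of_le hk
  refine ⟨3 + m, ?_⟩
  have h_far : ∀ i : ℕ, depU x α ζ (x + ↑(3 + i)) - depU x α ξ (x + ↑(3 + i)) =
      ζ (x + ↑(3 + i)) - ξ (x + ↑(3 + i)) := fun i => by
    rw [depU_apply_of_ne, depU_apply_of_ne] <;> omega
  rw [sum_range_add, sum_range_add, sum_congr rfl fun i _ => h_far i]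
  simp only [sum_sub_distrib, sum_range_three_depU]

lemma finsum_mem_Iic_sub_one_add_natCast {M : Type*} [AddCommMonoid M] {f : ℤ → M}
    (hf : f.support.Finite) (x : ℤ) (k : ℕ) :
    ∑ᶠ z ∈ Set.Iic (x - 1 + k), f z =
      ∑ᶠ z ∈ Set.Iic (x - 1), f z + ∑ i ∈ range k, f (x + i) := by
  induction k with
  | zero => simp
  | succ k ih =>
    have h_insert : Set.Iic (x - 1 + ↑(k + 1)) = insert (x + k) (Set.Iic (x - 1 + k)) := by
      ext z; simp only [Set.mem_Iic, Set.mem_insert_iff]; omega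
    rw [h_insert, finsum_mem_insert' f (by simp) (hf.inter_of_right _), ih, sum_range_succ]
    abel

lemma bddAbove_range_abs_finsum_mem_Iic {ι G : Type*} [Preorder ι] [AddCommGroup G]
    [LinearOrder G] [IsOrderedAddMonoid G] {f : ι → G} (hf : f.support.Finite) :
    BddAbove (Set.range fun y => |∑ᶠ z ∈ Set.Iic y, f z|) := by
  refine ⟨∑ z ∈ hf.toFinset, |f z|, ?_⟩
  rintro _ ⟨y, rfl⟩
  dsimp only
  rw [← finsum_mem_inter_support, finsum_mem_eq_finite_toFinset_sum _ (hf.inter_of_right _)]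
  refine (abs_sum_le_sum_abs _ _).trans
    (sum_le_sum_of_subset_of_nonneg ?_ fun _ _ _ => abs_nonneg _)
  exact Set.Finite.toFinset_subset_toFinset.mpr Set.inter_subset_right

lemma discrepancyPartialSum_sub_one_add_natCast {ζ ξ : ℤ → ℤ}
    (hfin : (Function.support fun z => ζ z - ξ z).Finite) (x : ℤ) (k : ℕ) :
    discrepancyPartialSum ζ ξ (x - 1 + k) =
      discrepancyPartialSum ζ ξ (x - 1) + ∑ i ∈ range k, (ζ (x + i) - ξ (x + i)) :=
  finsum_mem_Iic_sub_one_add_natCast hfin x k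

lemma support_eq_setOf_eq_one {η : ℤ → ℤ} (hη : ∀ z, η z = 0 ∨ η z = 1) :
    η.support = {z | η z = 1} := by
  ext z; rcases hη z with h | h <;> simp [h]

lemma support_depU_sub_subset (ζ ξ : ℤ → ℤ) (x α : ℤ) :
    (Function.support fun z => depU x α ζ z - depU x α ξ z) ⊆
      (Function.support fun z => ζ z - ξ z) ∪ Set.Icc x (x + 2) := by
  intro z hz
  by_cases hz_win : z ∈ Set.Icc x (x + 2)
  · exact .inr hz_win
  rw [Set.mem_Icc] at hz_win
  left
  rwa [Function.mem_support, depU_apply_of_ne, depU_apply_of_ne] at hz <;> omega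

lemma exists_discrepancyPartialSum_depU_eq {ζ ξ : ℤ → ℤ}
    (hζ : ∀ z, ζ z = 0 ∨ ζ z = 1) (hξ : ∀ z, ξ z = 0 ∨ ξ z = 1)
    (hfin : (Function.support fun z => ζ z - ξ z).Finite) (x α y : ℤ) :
    ∃ y', discrepancyPartialSum (depU x α ζ) (depU x α ξ) y = discrepancyPartialSum ζ ξ y' := by
  have h_left : ∀ y ≤ x - 1,
      discrepancyPartialSum (depU x α ζ) (depU x α ξ) y = discrepancyPartialSum ζ ξ y :=
    fun y hy => finsum_mem_congr rfl fun z (hz : z ≤ y) => by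
      rw [depU_apply_of_ne, depU_apply_of_ne] <;> omega
  have hfin' := (hfin.union (Set.finite_Icc x (x + 2))).subset (support_depU_sub_subset ζ ξ x α)
  rcases le_or_gt y (x - 1) with hy | hy
  · exact ⟨y, h_left y hy⟩
  obtain ⟨k, rfl⟩ : ∃ k : ℕ, y = x - 1 + k := ⟨(y - (x - 1)).toNat, by omega⟩
  obtain ⟨j, hj⟩ := exists_sum_range_depU_sub_eq hζ hξ x α k
  refine ⟨x - 1 + j, ?_⟩
  rw [discrepancyPartialSum_sub_one_add_natCast hfin',
    discrepancyPartialSum_sub_one_add_natCast hfin, h_left _ le_rfl, hj]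

theorem depU_macroscopic_stability_general
    (ζ ξ : ℤ → ℤ)
    (hζ : ∀ z, ζ z = 0 ∨ ζ z = 1)
    (hξ : ∀ z, ξ z = 0 ∨ ξ z = 1)
    (hζfin : {z : ℤ | ζ z = 1}.Finite)
    (hξfin : {z : ℤ | ξ z = 1}.Finite)
    (x α : ℤ) :
    depDelta (depU x α ζ) (depU x α ξ) ≤ depDelta ζ ξ := by
  rw [← support_eq_setOf_eq_one hζ] at hζfin
  rw [← support_eq_setOf_eq_one hξ] at hξfin
  have hfin := (hζfin.union hξfin).subset (Function.support_sub ζ ξ)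
  refine ciSup_mono_of_forall_exists (bddAbove_range_abs_finsum_mem_Iic hfin) fun y => ?_
  obtain ⟨y', hy'⟩ := exists_discrepancyPartialSum_depU_eq hζ hξ hfin x α y
  exact ⟨y', (congrArg abs hy').le⟩

/-- Exact macroscopic stability of DEP under the basic coupling: each elementary coupled
update cannot increase `Δ`. -/
theorem depU_macroscopic_stability
    (ζ ξ : ℤ → ℤ)
    (hζ : ∀ z, ζ z = 0 ∨ ζ z = 1)
    (hξ : ∀ z, ξ z = 0 ∨ ξ z = 1)
    (hζfin : {z : ℤ | ζ z = 1}.Finite)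
    (hξfin : {z : ℤ | ξ z = 1}.Finite)
    (x α : ℤ) (hα : α = 0 ∨ α = 1) :
    depDelta (depU x α ζ) (depU x α ξ) ≤ depDelta ζ ξ :=
  depU_macroscopic_stability_general ζ ξ hζ hξ hζfin hξfin x α
end

section
/- Annihilation of neighboring opposite-sign discrepancies under the basic coupling of DEP: let ζ, ξ : ℤ → {0,1} be configurations and x ∈ ℤ with ζ(x) = 1, ξ(x) = 0, ζ(x+1) = 0, ξ(x+1) = 1 (a positive discrepancy at x next to a negative discrepancy at x+1). Then for each α ∈ {0,1}, setting ζ' := U_{x,α}(ζ) and ξ' := U_{x,α}(ξ), one has ζ'(x) = ξ'(x), ζ'(x+1) = ξ'(x+1), and ζ'(z) = ζ(z) and ξ'(z) = ξ(z) for all z ∉ {x, x+1}. (Thus both clocks at x annihilate the pair, i.e. neighboring opposite-sign discrepancies annihilate with rate at least 2.) -/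
/-- Annihilation of neighboring opposite-sign discrepancies under the basic coupling of
DEP: if there is a positive discrepancy at `x` and a negative one at `x+1`, then both
clocks (`α = 0` and `α = 1`) at `x` annihilate the pair, leaving the other sites
unchanged. -/
theorem depU_discrepancies_annihilate
    (ζ ξ : ℤ → ℤ)
    (hζ : ∀ z, ζ z = 0 ∨ ζ z = 1)
    (hξ : ∀ z, ξ z = 0 ∨ ξ z = 1)
    (x : ℤ) (h1 : ζ x = 1) (h2 : ξ x = 0) (h3 : ζ (x + 1) = 0) (h4 : ξ (x + 1) = 1) :
    ∀ α : ℤ, α = 0 ∨ α = 1 →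
      depU x α ζ x = depU x α ξ x ∧
      depU x α ζ (x + 1) = depU x α ξ (x + 1) ∧
      ∀ z : ℤ, z ∉ ({x, x + 1} : Set ℤ) → depU x α ζ z = ζ z ∧ depU x α ξ z = ξ z := by
  intro α hα
  have hne : ζ x ≠ ζ (x + 1) := by rw [h1, h3]; decide
  have hne' : ξ x ≠ ξ (x + 1) := by rw [h2, h4]; decide
  have hx1 : x + 1 ≠ x := by omega
  rcases hα with rfl | rfl <;>
    simp [depU, depPhi, confSwap, h1, h2, h3, h4, hne, hne', hx1] <;>
    (intro z hz hz'; simp [hz, hz'])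
end
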